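/- For every sequence I of length n, Nai_W(I)/Maj_W(I) ≤ n/4 + 1 (precisely at most n/4 + 1/2 for even n and n/4 + 1 − 1/(4n) for odd n), and this is asymptotically attained by W_n; hence the relative worst order function of Nai and Maj is n/4. -/

import Mathlib

open scoped BigOperators

noncomputable section

/-- frequency of item `a` in sequence `I` -/
def freq (I : List ℕ) (a : ℕ) : ℝ := (I.count a : ℝ) / (I.length : ℝ)

/-- profit (aggregate frequency) of buffer sequence `S` against input `I` -/
def profit (I S : List ℕ) : ℝ := (S.map (freq I)).sum

/-- Naive algorithm: buffers every arriving item. -/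
def naiP (I : List ℕ) : ℝ := profit I I

/-- Buffers of the eager algorithm: buffer each arriving item until the first
repeated item (two equal consecutive items), then keep it forever. -/
def eagRun : List ℕ → List ℕ
  | [] => []
  | [x] => [x]
  | x :: y :: rest =>
      if x = y then x :: List.replicate (rest.length + 1) x
      else x :: eagRun (y :: rest)

def eagP (I : List ℕ) : ℝ := profit I (eagRun I)

/-- One step of the Majority algorithm on state (buffer, counter). -/
def majStep (s : ℕ × ℕ) (a : ℕ) : ℕ × ℕ :=
  if s.2 = 0 then (a, 1)
  else if a = s.1 then (s.1, s.2 + 1)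
  else (s.1, s.2 - 1)

def majBuffers (I : List ℕ) : List ℕ :=
  ((List.scanl majStep ((0 : ℕ), (0 : ℕ)) I).tail).map Prod.fst

def majP (I : List ℕ) : ℝ := profit I (majBuffers I)

/-- A valid offline buffer schedule: at each step the buffer holds either the
currently arriving item or the previously buffered item (the first buffered
item must be the first arriving item). -/
def ValidSched (I S : List ℕ) : Prop :=
  S.length = I.length ∧
    ∀ i, i < S.length →
      S.getD i 0 = I.getD i 0 ∨ (0 < i ∧ S.getD i 0 = S.getD (i - 1) 0)

/-- Optimal offline profit. -/
def optP (I : List ℕ) : ℝ := sSup {x | ∃ S, ValidSched I S ∧ x = profit I S}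

/-- Worst-permutation value of an algorithm's profit. -/
def worstP (f : List ℕ → ℝ) (I : List ℕ) : ℝ := sInf {x | ∃ J, J.Perm I ∧ x = f J}

/-- E_n = a,a,b,b,...,b with n-2 copies of b. -/
def Eseq (n a b : ℕ) : List ℕ := a :: a :: List.replicate (n - 2) b

/-- W_n = a_1,a_0,a_2,a_0,... with item 0 playing the role of a_0. -/
def Wseq (n : ℕ) : List ℕ :=
  ((List.range (n / 2)).flatMap fun i => [i + 1, 0]) ++
    (if n % 2 = 1 then [n / 2 + 1] else [])

/-- W'_n = a_1,...,a_⌈n/2⌉,a_0,...,a_0 with ⌊n/2⌋ copies of a_0 = 0. -/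
def Wseq' (n : ℕ) : List ℕ :=
  ((List.range ((n + 1) / 2)).map (· + 1)) ++ List.replicate (n / 2) 0

/-- I_n = ⌈n/2⌉ copies of a_0 = 0 followed by ⌊n/2⌋ distinct items. -/
def Iseq (n : ℕ) : List ℕ :=
  List.replicate ((n + 1) / 2) 0 ++ (List.range (n / 2)).map (· + 1)

/-- D(I): the items of `I` listed in nondecreasing order of frequency. -/
def Dsort (I : List ℕ) : List ℕ :=
  List.insertionSort (fun x y => I.count x ≤ I.count y) I

/-- The interleaving permutation a'_1, a'_n, a'_2, a'_{n-1}, ... of a list. -/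
def interleave : List ℕ → List ℕ
  | [] => []
  | x :: xs => x :: interleave xs.reverse
termination_by l => l.length
decreasing_by set_option linter.unnecessarySimpa false in simpa using Nat.lt_succ_self xs.length

/-- max over sequences of length n of f(I) - g(I). -/
def maxDiff (f g : List ℕ → ℝ) (n : ℕ) : ℝ :=
  sSup {d | ∃ I : List ℕ, I.length = n ∧ d = f I - g I}

/-- min over sequences of length n of f(I) - g(I). -/
def minDiff (f g : List ℕ → ℝ) (n : ℕ) : ℝ :=
  sInf {d | ∃ I : List ℕ, I.length = n ∧ d = f I - g I}

/-- A deterministic online algorithm for the single-buffer frequent items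
problem: the buffer after each nonempty prefix is either the arriving item or
the previous buffer content. -/
structure OnlineAlg where
  buf : List ℕ → ℕ
  first : ∀ x, buf [x] = x
  step : ∀ l x, l ≠ [] → buf (l ++ [x]) = x ∨ buf (l ++ [x]) = buf l

/-- Profit of an online algorithm on input `I`. -/
def oprofit (A : OnlineAlg) (I : List ℕ) : ℝ :=
  ∑ t ∈ Finset.range I.length, freq I (A.buf (I.take (t + 1)))

end

/-!
Write `c a` for the number of occurrences of `a` in a sequence `J` of length `n` and `s a` for
the number of steps at which Majority holds `a` in its buffer. Then `n · Nai(J) = ∑ c a ^ 2`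
and `n · Maj(J) = ∑ s a * c a`, where `∑ s a = ∑ c a = n`. A potential argument on Majority's
counter gives `s a ≤ 2 * c a`, hence also `2 * c a ≤ n + s a`. Under these constraints the per-item
inequality `4 c² + 2 n s ≤ (n + 2) s c + 2 n c` sums to `4 ∑ c a ^ 2 ≤ (n + 2) ∑ s a * c a`, that is
`Nai(J) ≤ (n + 2) / 4 · Maj(J)` for every permutation `J` of `I`.

On `W_n` Majority buffers every fresh item at its arrival and the following step, and never
`a₀`, so `Maj(W_n) = 1`, the least possible value, while `n · Nai(W_n) = k (k + 1) + (n mod 2)`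
with `k = ⌊n / 2⌋`.
-/

theorem four_mul_sq_add_le (n c s : ℕ) (hs : s ≤ 2 * c) (hc : 2 * c ≤ n + s) :
    4 * c ^ 2 + 2 * n * s ≤ max 4 (n + 2) * (s * c) + 2 * n * c := by
  rcases Nat.lt_or_ge n 2 with hn | hn
  · rw [show max 4 (n + 2) = 4 by omega]
    rcases (by omega : s = 2 * c ∨ s + 1 = 2 * c) with rfl | hs1
    · nlinarith
    · obtain ⟨k, rfl⟩ : ∃ k, c = k + 1 := ⟨c - 1, by omega⟩
      obtain rfl : s = 2 * k + 1 := by omega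
      nlinarith
  rw [show max 4 (n + 2) = n + 2 by omega]
  rcases Nat.lt_or_ge c 2 with hc2 | hc2
  · interval_cases c
    · simp_all
    · nlinarith [Nat.mul_le_mul (Nat.sub_le_sub_right hn 2) (Nat.sub_le_sub_left hs 2)]
  zify at *
  have hcoef : (0 : ℤ) ≤ (n + 2) * c - 2 * n := by nlinarith
  rcases le_total (2 * (c : ℤ)) n with h | h
  · nlinarith [mul_nonneg hcoef (by positivity : (0 : ℤ) ≤ s),
      mul_nonneg (by positivity : (0 : ℤ) ≤ c) (sub_nonneg.2 h)]
  · nlinarith [mul_nonneg hcoef (by linarith : (0 : ℤ) ≤ s - (2 * c - n)),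
      mul_nonneg (mul_nonneg (by positivity : (0 : ℤ) ≤ n) (sub_nonneg.2 h))
        (by linarith : (0 : ℤ) ≤ c - 2)]

theorem four_mul_sum_sq_le {ι : Type*} (A : Finset ι) (c s : ι → ℕ) (n : ℕ)
    (hc : ∑ a ∈ A, c a = n) (hs : ∑ a ∈ A, s a = n) (hsc : ∀ a ∈ A, s a ≤ 2 * c a) :
    4 * ∑ a ∈ A, c a ^ 2 ≤ max 4 (n + 2) * ∑ a ∈ A, s a * c a := by
  classical
  have hcs : ∀ a ∈ A, 2 * c a ≤ n + s a := by
    intro a ha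
    have hrest : ∑ b ∈ A.erase a, s b ≤ 2 * ∑ b ∈ A.erase a, c b := by
      rw [Finset.mul_sum]
      exact Finset.sum_le_sum fun b hb => hsc b (Finset.mem_of_mem_erase hb)
    have := Finset.add_sum_erase A s ha
    have := Finset.add_sum_erase A c ha
    omega
  have := Finset.sum_le_sum fun a ha =>
    four_mul_sq_add_le n (c a) (s a) (hsc a ha) (hcs a ha)
  simp only [Finset.sum_add_distrib, ← Finset.mul_sum, hc, hs] at this
  linarith

theorem sum_map_eq_sum_count_smul {α M : Type*} [DecidableEq α] [AddCommMonoid M]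
    {l : List α} {A : Finset α} (hl : l.toFinset ⊆ A) (f : α → M) :
    (l.map f).sum = ∑ a ∈ A, l.count a • f a := by
  rw [Finset.sum_list_map_count]
  exact Finset.sum_subset hl fun a _ ha => by
    rw [List.count_eq_zero_of_not_mem (mt List.mem_toFinset.2 ha), zero_smul]

section Profit

variable {I S : List ℕ}

theorem profit_append (T : List ℕ) : profit I (S ++ T) = profit I S + profit I T := by
  simp [profit]

theorem profit_flatMap (L : List ℕ) (f : ℕ → List ℕ) :
    profit I (L.flatMap f) = (L.map fun x => profit I (f x)).sum := by
  induction L with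
  | nil => simp [profit]
  | cons x L ih => simp [List.flatMap_cons, profit_append, ih]

theorem profit_eq_sum_count (hS : S.toFinset ⊆ I.toFinset) :
    profit I S = ((∑ a ∈ I.toFinset, S.count a * I.count a : ℕ) : ℝ) / I.length := by
  rw [profit, sum_map_eq_sum_count_smul hS, Nat.cast_sum, Finset.sum_div]
  refine Finset.sum_congr rfl fun a _ => ?_
  simp [freq, mul_div_assoc]

theorem profit_eq_length_div (hS : ∀ x ∈ S, I.count x = 1) :
    profit I S = S.length / I.length := by
  rw [profit, List.map_congr_left fun x hx => show freq I x = 1 / I.length by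
    rw [freq, hS x hx, Nat.cast_one]]
  simp [List.map_const', div_eq_mul_inv]

theorem naiP_perm {J : List ℕ} (h : J.Perm I) : naiP J = naiP I := by
  have hfreq : freq J = freq I := funext fun a => by simp [freq, h.count_eq, h.length_eq]
  rw [naiP, naiP, profit, profit, hfreq]
  exact (h.map _).sum_eq

end Profit

def majBuffersFrom (s : ℕ × ℕ) (l : List ℕ) : List ℕ :=
  ((List.scanl majStep s l).tail).map Prod.fst

@[simp]
theorem majBuffersFrom_nil (s : ℕ × ℕ) : majBuffersFrom s [] = [] := rfl

@[simp]
theorem majBuffersFrom_cons (s : ℕ × ℕ) (x : ℕ) (l : List ℕ) :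
    majBuffersFrom s (x :: l) = (majStep s x).1 :: majBuffersFrom (majStep s x) l := by
  cases l <;> simp [majBuffersFrom, List.scanl_cons]

theorem majBuffers_eq_majBuffersFrom (l : List ℕ) : majBuffers l = majBuffersFrom (0, 0) l := rfl

@[simp]
theorem length_majBuffers (l : List ℕ) : (majBuffers l).length = l.length := by
  simp [majBuffers]

def majPotential (a : ℕ) (s : ℕ × ℕ) : ℕ := if s.1 = a then s.2 else 0

-- Each step that buffers `a` is paid for by an arrival of `a` or by a unit of `a`'s counter.
theorem majStep_count_add_potential_le (a x : ℕ) (s : ℕ × ℕ) :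
    (if (majStep s x).1 = a then 1 else 0) + majPotential a (majStep s x) ≤
      2 * (if x = a then 1 else 0) + majPotential a s := by
  unfold majStep majPotential
  split_ifs <;> simp_all <;> omega

theorem count_majBuffersFrom_le (a : ℕ) (l : List ℕ) (s : ℕ × ℕ) :
    (majBuffersFrom s l).count a ≤ 2 * l.count a + majPotential a s := by
  induction l generalizing s with
  | nil => simp
  | cons x l ih =>
    have := majStep_count_add_potential_le a x s
    have := ih (majStep s x)
    simp only [majBuffersFrom_cons, List.count_cons, beq_iff_eq]
    split_ifs at * <;> omega

theorem count_majBuffers_le (l : List ℕ) (a : ℕ) : (majBuffers l).count a ≤ 2 * l.count a := by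
  simpa [majBuffers_eq_majBuffersFrom, majPotential] using count_majBuffersFrom_le a l (0, 0)

theorem toFinset_majBuffers_subset (l : List ℕ) : (majBuffers l).toFinset ⊆ l.toFinset := by
  intro a ha
  have := count_majBuffers_le l a
  rw [List.mem_toFinset, ← List.count_pos_iff] at ha ⊢
  omega

theorem sum_count_majBuffers (l : List ℕ) :
    ∑ a ∈ l.toFinset, (majBuffers l).count a = l.length := by
  have := sum_map_eq_sum_count_smul (toFinset_majBuffers_subset l) fun _ => (1 : ℕ)
  simp only [smul_eq_mul, mul_one, List.map_const', List.sum_replicate, length_majBuffers] at this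
  exact this.symm

theorem majP_eq_sum (l : List ℕ) :
    majP l = ((∑ a ∈ l.toFinset, (majBuffers l).count a * l.count a : ℕ) : ℝ) / l.length :=
  profit_eq_sum_count (toFinset_majBuffers_subset l)

theorem one_le_majP {l : List ℕ} (hl : l ≠ []) : 1 ≤ majP l := by
  have hlen : (0 : ℝ) < l.length := by exact_mod_cast List.length_pos_iff.2 hl
  have hsum : l.length ≤ ∑ a ∈ l.toFinset, (majBuffers l).count a * l.count a := by
    rw [← sum_count_majBuffers]
    exact Finset.sum_le_sum fun a ha =>
      Nat.le_mul_of_pos_right _ (List.count_pos_iff.2 (List.mem_toFinset.1 ha))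
  rw [majP_eq_sum, le_div_iff₀ hlen, one_mul]
  exact_mod_cast hsum

theorem naiP_le_mul_majP (l : List ℕ) :
    naiP l ≤ max 1 (((l.length : ℝ) + 2) / 4) * majP l := by
  have key := four_mul_sum_sq_le l.toFinset (l.count ·) ((majBuffers l).count ·) l.length
    (List.sum_toFinset_count_eq_length l) (sum_count_majBuffers l)
    fun a _ => count_majBuffers_le l a
  have hmax : max (1 : ℝ) ((l.length + 2) / 4) = max 4 ((l.length : ℝ) + 2) / 4 := by
    rw [← max_div_div_right (by norm_num)]
    norm_num
  rw [naiP, profit_eq_sum_count subset_rfl, majP_eq_sum, hmax, ← mul_div_assoc]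
  gcongr
  simp only [← sq]
  rw [div_mul_eq_mul_div, le_div_iff₀ (by norm_num), mul_comm]
  exact_mod_cast key

theorem le_mul_worstP {f : List ℕ → ℝ} {I : List ℕ} {K x : ℝ} (hK : 0 < K)
    (h : ∀ J, J.Perm I → x ≤ K * f J) : x ≤ K * worstP f I := by
  rw [← div_le_iff₀' hK]
  refine le_csInf ⟨f I, I, List.Perm.refl I, rfl⟩ ?_
  rintro _ ⟨J, hJ, rfl⟩
  rw [div_le_iff₀' hK]
  exact h J hJ

theorem worstP_eq_of_forall_le {f : List ℕ → ℝ} {I : List ℕ} (h : ∀ J, J.Perm I → f I ≤ f J) :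
    worstP f I = f I := by
  refine le_antisymm (csInf_le ⟨f I, ?_⟩ ⟨I, List.Perm.refl I, rfl⟩)
    (le_csInf ⟨f I, I, List.Perm.refl I, rfl⟩ ?_) <;>
  · rintro _ ⟨J, hJ, rfl⟩
    exact h J hJ

theorem naiP_le_mul_worstP_majP (I : List ℕ) {K : ℝ} (hK : 0 < K)
    (hKI : I ≠ [] → max 1 (((I.length : ℝ) + 2) / 4) ≤ K) : naiP I ≤ K * worstP majP I := by
  refine le_mul_worstP hK fun J hJ => ?_
  rcases eq_or_ne I [] with rfl | hI
  · simp [List.perm_nil.1 hJ, naiP, majP, majBuffers, profit]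
  calc naiP I = naiP J := (naiP_perm hJ).symm
    _ ≤ max 1 (((J.length : ℝ) + 2) / 4) * majP J := naiP_le_mul_majP J
    _ ≤ K * majP J := by
      rw [hJ.length_eq]
      gcongr
      · exact zero_le_one.trans (one_le_majP fun h => hI (List.nil_perm.1 (h ▸ hJ)))
      · exact hKI hI

section Alternating

variable {L r : List ℕ}

theorem majBuffersFrom_flatMap_pair_append (hL : 0 ∉ L) (s : ℕ × ℕ) (hs : s.2 = 0)
    (r : List ℕ) : ∃ s' : ℕ × ℕ, s'.2 = 0 ∧
      majBuffersFrom s (L.flatMap (fun x => [x, 0]) ++ r) =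
        L.flatMap (fun x => [x, x]) ++ majBuffersFrom s' r := by
  induction L generalizing s with
  | nil => exact ⟨s, hs, rfl⟩
  | cons x L ih =>
    have hx : x ≠ 0 := fun h => hL (h ▸ List.mem_cons_self ..)
    obtain ⟨s', hs', h⟩ := ih (fun h => hL (List.mem_cons_of_mem x h)) (x, 0) rfl
    have h1 : majStep s x = (x, 1) := by simp [majStep, hs]
    have h2 : majStep (x, 1) 0 = (x, 0) := by simp [majStep, Ne.symm hx]
    exact ⟨s', hs', by simp [List.flatMap_cons, h1, h2, h]⟩

theorem majBuffers_flatMap_pair_append (hL : 0 ∉ L) (hr : r.length ≤ 1) :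
    majBuffers (L.flatMap (fun x => [x, 0]) ++ r) = L.flatMap (fun x => [x, x]) ++ r := by
  obtain ⟨s, hs, h⟩ := majBuffersFrom_flatMap_pair_append hL (0, 0) rfl r
  rw [majBuffers_eq_majBuffersFrom, h]
  match r, hr with
  | [], _ => rfl
  | [y], _ => simp [majStep, hs]

theorem count_flatMap_pair_of_ne_zero {b : ℕ} (hb : b ≠ 0) :
    (L.flatMap (fun x => [x, 0])).count b = L.count b := by
  induction L with
  | nil => rfl
  | cons x L ih => simp [List.flatMap_cons, List.count_cons, ih, Ne.symm hb]

theorem count_zero_flatMap_pair (hL : 0 ∉ L) :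
    (L.flatMap (fun x => [x, 0])).count 0 = L.length := by
  induction L with
  | nil => rfl
  | cons x L ih =>
    simp only [List.mem_cons, not_or] at hL
    simp [List.flatMap_cons, ih hL.2, Ne.symm hL.1]

theorem count_flatMap_pair_append_of_mem (h0 : 0 ∉ L ++ r) (hnd : (L ++ r).Nodup) {b : ℕ}
    (hb : b ∈ L ++ r) : (L.flatMap (fun x => [x, 0]) ++ r).count b = 1 := by
  rw [List.count_append, count_flatMap_pair_of_ne_zero (ne_of_mem_of_not_mem hb h0),
    ← List.count_append]
  exact List.count_eq_one_of_mem hnd hb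

theorem naiP_flatMap_pair_append (h0 : 0 ∉ L ++ r) (hnd : (L ++ r).Nodup) :
    naiP (L.flatMap (fun x => [x, 0]) ++ r) =
      (L.length * (1 + L.length) + r.length) / (2 * L.length + r.length) := by
  set X := L.flatMap (fun x => [x, 0]) ++ r with hX
  have hlen : (X.length : ℝ) = 2 * L.length + r.length := by
    simp [X, List.length_flatMap]
    ring
  have hcount0 : X.count 0 = L.length := by
    rw [List.count_append, count_zero_flatMap_pair fun h => h0 (List.mem_append_left r h),
      List.count_eq_zero_of_not_mem fun h => h0 (List.mem_append_right L h), add_zero]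
  have hpair : ∀ x ∈ L, profit X [x, 0] = (1 + L.length) / X.length := by
    intro x hx
    have hcount : X.count x = 1 :=
      count_flatMap_pair_append_of_mem h0 hnd (List.mem_append_left r hx)
    simp [profit, freq, hcount, hcount0, add_div]
  rw [naiP, profit_append, profit_flatMap, List.map_congr_left hpair,
    profit_eq_length_div fun x hx =>
      count_flatMap_pair_append_of_mem h0 hnd (List.mem_append_right L hx), ← hX]
  simp only [List.map_const', List.sum_replicate, nsmul_eq_mul, hlen]
  ring

theorem majP_flatMap_pair_append (h0 : 0 ∉ L ++ r) (hnd : (L ++ r).Nodup) (hr : r.length ≤ 1)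
    (hne : L.flatMap (fun x => [x, 0]) ++ r ≠ []) :
    majP (L.flatMap (fun x => [x, 0]) ++ r) = 1 := by
  have hbuf := majBuffers_flatMap_pair_append (fun h => h0 (List.mem_append_left r h)) hr
  rw [majP, profit_eq_length_div, length_majBuffers, div_self]
  · exact Nat.cast_ne_zero.2 (List.length_pos_iff.2 hne).ne'
  · intro x hx
    rw [hbuf] at hx
    refine count_flatMap_pair_append_of_mem h0 hnd ?_
    simpa [List.mem_flatMap] using hx

end Alternating

theorem exists_Wseq_eq_flatMap_pair_append (n : ℕ) :
    ∃ L r : List ℕ, Wseq n = L.flatMap (fun x => [x, 0]) ++ r ∧ 0 ∉ L ++ r ∧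
      (L ++ r).Nodup ∧ L.length = n / 2 ∧ r.length = n % 2 := by
  refine ⟨(List.range (n / 2)).map (· + 1), if n % 2 = 1 then [n / 2 + 1] else [],
    by simp [Wseq, List.flatMap_map], ?_⟩
  have hitems : (List.range (n / 2)).map (· + 1) ++ (if n % 2 = 1 then [n / 2 + 1] else []) =
      (List.range ((n + 1) / 2)).map (· + 1) := by
    rcases Nat.mod_two_eq_zero_or_one n with h | h
    · simp [h, show (n + 1) / 2 = n / 2 by omega]
    · simp [h, show (n + 1) / 2 = n / 2 + 1 by omega, List.range_succ]
  rw [hitems]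
  refine ⟨by simp, List.nodup_range.map (add_left_injective 1), by simp, ?_⟩
  rcases Nat.mod_two_eq_zero_or_one n with h | h <;> simp [h]

theorem length_Wseq (n : ℕ) : (Wseq n).length = n := by
  obtain ⟨L, r, hW, -, -, hL, hr⟩ := exists_Wseq_eq_flatMap_pair_append n
  simp [hW, List.length_flatMap, hL, hr]
  omega

theorem naiP_Wseq (n : ℕ) :
    naiP (Wseq n) = ((n / 2 : ℕ) * (1 + (n / 2 : ℕ)) + (n % 2 : ℕ)) / n := by
  obtain ⟨L, r, hW, h0, hnd, hL, hr⟩ := exists_Wseq_eq_flatMap_pair_append n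
  rw [hW, naiP_flatMap_pair_append h0 hnd, hL, hr]
  congr
  exact_mod_cast Nat.div_add_mod n 2

theorem worstP_majP_Wseq {n : ℕ} (hn : n ≠ 0) : worstP majP (Wseq n) = 1 := by
  obtain ⟨L, r, hW, h0, hnd, -, hr⟩ := exists_Wseq_eq_flatMap_pair_append n
  have hW0 : Wseq n ≠ [] := List.ne_nil_of_length_pos (by rw [length_Wseq]; omega)
  have hmaj : majP (Wseq n) = 1 := by
    rw [hW] at hW0 ⊢
    exact majP_flatMap_pair_append h0 hnd (by omega) hW0
  have hle : ∀ J, J.Perm (Wseq n) → majP (Wseq n) ≤ majP J := fun J hJ =>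
    hmaj ▸ one_le_majP fun hJ0 => hW0 (List.nil_perm.1 (hJ0 ▸ hJ))
  rw [worstP_eq_of_forall_le hle, hmaj]

/-- Nai_W(I)/Maj_W(I) ≤ n/4 + 1 (at most n/4 + 1/2 for even n and
n/4 + 1 − 1/(4n) for odd n), asymptotically attained by W_n; hence the relative
worst order function of Nai and Maj is n/4. -/
theorem stmt18 :
    (∀ I : List ℕ,
      naiP I ≤ ((I.length : ℝ) / 4 + 1) * worstP majP I ∧
      (Even I.length → naiP I ≤ ((I.length : ℝ) / 4 + 1 / 2) * worstP majP I) ∧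
      (Odd I.length →
        naiP I ≤ ((I.length : ℝ) / 4 + 1 - 1 / (4 * I.length)) * worstP majP I)) ∧
    (∀ n : ℕ, Even n → 2 ≤ n →
      naiP (Wseq n) = ((n : ℝ) / 4 + 1 / 2) * worstP majP (Wseq n)) ∧
    (∀ n : ℕ, Odd n →
      naiP (Wseq n) = ((n : ℝ) / 4 + 3 / (4 * n)) * worstP majP (Wseq n)) := by
  refine ⟨fun I => ⟨?_, fun hE => ?_, fun hO => ?_⟩, fun n hE hn => ?_, fun n hO => ?_⟩
  · have := (Nat.cast_nonneg I.length : (0 : ℝ) ≤ I.length)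
    exact naiP_le_mul_worstP_majP I (by positivity) fun _ => max_le (by linarith) (by linarith)
  · refine naiP_le_mul_worstP_majP I (by positivity) fun hI => max_le ?_ (by linarith)
    obtain ⟨k, hk⟩ := hE
    have : (2 : ℝ) ≤ I.length := by
      have := List.length_pos_iff.2 hI
      exact_mod_cast (by omega : 2 ≤ I.length)
    linarith
  · have h1 : (1 : ℝ) ≤ I.length := by exact_mod_cast hO.pos
    have hinv : 1 / (4 * (I.length : ℝ)) ≤ 1 / 4 := by gcongr; linarith
    exact naiP_le_mul_worstP_majP I (by linarith) fun _ => max_le (by linarith) (by linarith)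
  · rw [naiP_Wseq, worstP_majP_Wseq (by omega), mul_one]
    obtain ⟨k, rfl⟩ := hE
    rw [show (k + k) / 2 = k by omega, show (k + k) % 2 = 0 by omega]
    have : (0 : ℝ) < k := by exact_mod_cast (by omega : 0 < k)
    push_cast
    field_simp
    ring
  · rw [naiP_Wseq, worstP_majP_Wseq hO.pos.ne', mul_one]
    obtain ⟨k, rfl⟩ := hO
    rw [show (2 * k + 1) / 2 = k by omega, show (2 * k + 1) % 2 = 1 by omega]
    push_cast
    field_simp
    ring
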